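/- Let σ be a d × d diagonal density matrix (nonnegative diagonal entries summing to 1). Let S and S′ be disjoint subsets of {1,...,d} of sizes d₁ ≥ d₂ ≥ 1 respectively, and let j, j′ be nonnegative integers such that σ_{ii} ∈ [2^{−j−1}, 2^{−j}] for all i ∈ S and σ_{ii} ∈ [2^{−j′−1}, 2^{−j′}] for all i ∈ S′. Let W be a d₁ × d₂ complex matrix with orthonormal columns (Wᴴ W = I), and let σ_W = σ + D_W, where D_W is the d × d Hermitian matrix that is zero except in the off-diagonal blocks with rows indexed by S and columns indexed by S′ (and the adjoint block), where it equals (ε/(2 d₂)) · W (respectively (ε/(2 d₂)) · Wᴴ). If 0 < ε ≤ d₂ · 2^{−j/2 − j′/2}, then ‖σ − σ_W‖₁ ≥ ε and σ_W is a density matrix (positive semidefinite with trace 1). -/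

import Mathlib

/-!
Write `E_f, E_g` for the isometries `ℂ^{d₁}, ℂ^{d₂} → ℂ^d` given by `f` and `g`, and
`c = ε / (2 d₂)`, so that `D_W = c X` with `X = U E_gᴴ + E_g Uᴴ` and `U = E_f W`. Since `U` and
`E_g` are isometries with orthogonal ranges, `X` squares to the projection `P = U Uᴴ + E_g E_gᴴ`;
hence `|X| = P` and `‖D_W‖₁ = c · tr P = 2 c d₂ = ε`.

For positivity, the eigenvalue bounds give `c² ≤ a b` with `a = 2^{-j-1}` and `b = 2^{-j'-1}`.
With `α = √a` and `s = c / α` (so `s² ≤ b`) one has `σ + c X = R + Y Yᴴ`, where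
`Y = α E_f + s E_g Wᴴ` and `R` is diagonal with entries `σᵢᵢ - a [i ∈ S] - s² [i ∈ S']`,
which are nonnegative because `S` and `S'` are disjoint. Finally `D_W` has zero diagonal, so
`σ_W` has the trace of `σ`.
-/

open Matrix ComplexOrder

/-- The trace norm (Schatten-1 norm) of a complex matrix: `‖M‖₁ = Tr √(Mᴴ M)`. -/
noncomputable def traceNorm {m n : Type*} [Fintype m] [Fintype n] [DecidableEq n]
    (B : Matrix m n ℂ) : ℝ :=
  ((Matrix.posSemidef_conjTranspose_mul_self B).1.eigenvectorUnitary.1 *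
    diagonal (((↑) : ℝ → ℂ) ∘ (fun x : ℝ => √x) ∘ (Matrix.posSemidef_conjTranspose_mul_self B).1.eigenvalues) *
    (star (Matrix.posSemidef_conjTranspose_mul_self B).1.eigenvectorUnitary : Matrix n n ℂ)).trace.re

section TraceNorm

variable {m n p : Type*} [Fintype m] [Fintype n] [Fintype p] [DecidableEq n] [DecidableEq p]

open scoped MatrixOrder in
lemma traceNorm_eq_of_mul_self_eq (B : Matrix m n ℂ) {M : Matrix n n ℂ} (hM : M.PosSemidef)
    (hMB : M * M = Bᴴ * B) : traceNorm B = M.trace.re := by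
  have hB := Matrix.posSemidef_conjTranspose_mul_self B
  have h_cfc : hB.1.eigenvectorUnitary.1 * diagonal (((↑) : ℝ → ℂ) ∘ (fun x : ℝ => √x) ∘
      hB.1.eigenvalues) * (star hB.1.eigenvectorUnitary : Matrix n n ℂ) =
      cfc Real.sqrt (Bᴴ * B) := by
    rw [hB.1.cfc_eq]
    rfl
  have h_sqrt : cfc Real.sqrt (Bᴴ * B) = M := by
    rw [← cfcₙ_eq_cfc, ← CFC.sqrt_eq_real_sqrt _ hB.nonneg, CFC.sqrt_unique hMB hM.nonneg]
  rw [traceNorm, h_cfc, h_sqrt]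

lemma traceNorm_smul_add_conjTranspose {U V : Matrix n p ℂ} (hU : Uᴴ * U = 1)
    (hV : Vᴴ * V = 1) (hUV : Uᴴ * V = 0) (c : ℝ) :
    traceNorm (c • (U * Vᴴ + V * Uᴴ)) = 2 * |c| * Fintype.card p := by
  have hVU : Vᴴ * U = 0 := by
    rw [← conjTranspose_conjTranspose U, ← conjTranspose_mul, hUV, conjTranspose_zero]
  have hU' (Z : Matrix p n ℂ) : Uᴴ * (U * Z) = Z := by rw [← Matrix.mul_assoc, hU, Matrix.one_mul]
  have hV' (Z : Matrix p n ℂ) : Vᴴ * (V * Z) = Z := by rw [← Matrix.mul_assoc, hV, Matrix.one_mul]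
  have hUV' (Z : Matrix p n ℂ) : Uᴴ * (V * Z) = 0 := by
    rw [← Matrix.mul_assoc, hUV, Matrix.zero_mul]
  have hVU' (Z : Matrix p n ℂ) : Vᴴ * (U * Z) = 0 := by
    rw [← Matrix.mul_assoc, hVU, Matrix.zero_mul]
  set X := U * Vᴴ + V * Uᴴ
  set P := U * Uᴴ + V * Vᴴ
  have hP : P.PosSemidef :=
    (posSemidef_self_mul_conjTranspose U).add (posSemidef_self_mul_conjTranspose V)
  have hX : Xᴴ = X := by
    rw [conjTranspose_add, conjTranspose_mul, conjTranspose_mul, conjTranspose_conjTranspose,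
      conjTranspose_conjTranspose, add_comm]
  have hXX : X * X = P := by
    simp only [X, add_mul, mul_add, Matrix.mul_assoc, hU', hV', hUV', hVU', Matrix.mul_zero,
      zero_add, add_zero]
    exact add_comm _ _
  have hPP : P * P = P := by
    simp only [P, add_mul, mul_add, Matrix.mul_assoc, hU', hV', hUV', hVU', Matrix.mul_zero,
      zero_add, add_zero]
  have hsq : (|c| • P) * (|c| • P) = (c • X)ᴴ * (c • X) := by
    rw [smul_mul_smul_comm, hPP, conjTranspose_smul, smul_mul_smul_comm, hX, hXX, star_trivial,
      ← sq, sq_abs, sq]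
  rw [traceNorm_eq_of_mul_self_eq _ (hP.smul (abs_nonneg c)) hsq]
  simp [P, trace_add, trace_mul_comm U, trace_mul_comm V, hU, hV]
  ring

end TraceNorm

section EmbeddingMatrix

variable (R : Type*) {m n p : Type*} [DecidableEq n] [Semiring R] [StarRing R]

def embeddingMatrix (f : m ↪ n) : Matrix n m R := (1 : Matrix n n R).submatrix id f

lemma conjTranspose_embeddingMatrix (f : m ↪ n) :
    (embeddingMatrix R f)ᴴ = (1 : Matrix n n R).submatrix f id := by
  rw [embeddingMatrix, conjTranspose_submatrix, conjTranspose_one]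

lemma conjTranspose_embeddingMatrix_mul [Fintype n] (f : m ↪ n) (g : p ↪ n) :
    (embeddingMatrix R f)ᴴ * embeddingMatrix R g = (1 : Matrix n n R).submatrix f g := by
  rw [conjTranspose_embeddingMatrix, embeddingMatrix,
    ← submatrix_mul (1 : Matrix n n R) 1 f id g Function.bijective_id, Matrix.one_mul]

lemma conjTranspose_embeddingMatrix_mul_self [Fintype n] [DecidableEq m] (f : m ↪ n) :
    (embeddingMatrix R f)ᴴ * embeddingMatrix R f = 1 := by
  rw [conjTranspose_embeddingMatrix_mul, submatrix_one_embedding]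

lemma conjTranspose_embeddingMatrix_mul_of_disjoint [Fintype n] {f : m ↪ n} {g : p ↪ n}
    (hfg : ∀ k k', f k ≠ g k') : (embeddingMatrix R f)ᴴ * embeddingMatrix R g = 0 := by
  ext k k'
  simp [conjTranspose_embeddingMatrix_mul, one_apply, hfg]

lemma embeddingMatrix_mul_conjTranspose [Fintype m] (f : m ↪ n) :
    embeddingMatrix R f * (embeddingMatrix R f)ᴴ = diagonal ((Set.range f).indicator 1) := by
  ext i i'
  rw [conjTranspose_embeddingMatrix, embeddingMatrix]
  simp only [mul_apply, submatrix_apply, id, one_apply, diagonal_apply, Set.indicator,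
    Set.mem_range, Pi.one_apply]
  by_cases hi : ∃ k, f k = i
  · obtain ⟨k, rfl⟩ := hi
    rw [Finset.sum_eq_single k (fun x _ hx => by simp [f.injective.ne hx.symm]) (by simp)]
    simp
  · simp only [not_exists] at hi
    simp [hi, fun k => Ne.symm (hi k)]

end EmbeddingMatrix

section OffDiagBlock

variable {m n p : Type*} [Fintype m] [Fintype p] [DecidableEq n]

def offDiagBlock (f : m ↪ n) (g : p ↪ n) (W : Matrix m p ℂ) : Matrix n n ℂ :=
  embeddingMatrix ℂ f * W * (embeddingMatrix ℂ g)ᴴ +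
    embeddingMatrix ℂ g * Wᴴ * (embeddingMatrix ℂ f)ᴴ

lemma offDiagBlock_apply (f : m ↪ n) (g : p ↪ n) (W : Matrix m p ℂ) (i i' : n) :
    offDiagBlock f g W i i' =
      (∑ k, ∑ k', if i = f k ∧ i' = g k' then W k k' else 0) +
        ∑ k, ∑ k', if i = g k' ∧ i' = f k then star (W k k') else 0 := by
  simp_rw [@and_comm (i = _)]
  rw [Finset.sum_comm (f := fun k k' => if i' = g k' ∧ i = f k then W k k' else 0)]
  simp [offDiagBlock, embeddingMatrix, mul_apply, one_apply, ite_and, mul_ite, eq_comm]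

lemma trace_offDiagBlock [Fintype n] {f : m ↪ n} {g : p ↪ n} (hfg : ∀ k k', f k ≠ g k')
    (W : Matrix m p ℂ) : (offDiagBlock f g W).trace = 0 := by
  have hgf : (embeddingMatrix ℂ g)ᴴ * embeddingMatrix ℂ f = 0 :=
    conjTranspose_embeddingMatrix_mul_of_disjoint ℂ fun k' k => (hfg k k').symm
  rw [offDiagBlock, trace_add, trace_mul_cycle, hgf, trace_mul_cycle,
    conjTranspose_embeddingMatrix_mul_of_disjoint ℂ hfg]
  simp

lemma traceNorm_smul_offDiagBlock [Fintype n] [DecidableEq m] [DecidableEq p] {f : m ↪ n}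
    {g : p ↪ n} (hfg : ∀ k k', f k ≠ g k') {W : Matrix m p ℂ} (hW : Wᴴ * W = 1) (c : ℝ) :
    traceNorm (c • offDiagBlock f g W) = 2 * |c| * Fintype.card p := by
  have hU : (embeddingMatrix ℂ f * W)ᴴ * (embeddingMatrix ℂ f * W) = 1 := by
    rw [conjTranspose_mul, Matrix.mul_assoc, ← Matrix.mul_assoc (embeddingMatrix ℂ f)ᴴ,
      conjTranspose_embeddingMatrix_mul_self, Matrix.one_mul, hW]
  have hUV : (embeddingMatrix ℂ f * W)ᴴ * embeddingMatrix ℂ g = 0 := by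
    rw [conjTranspose_mul, Matrix.mul_assoc, conjTranspose_embeddingMatrix_mul_of_disjoint ℂ hfg,
      Matrix.mul_zero]
  convert traceNorm_smul_add_conjTranspose hU (conjTranspose_embeddingMatrix_mul_self ℂ g) hUV c
    using 3
  simp only [offDiagBlock, conjTranspose_mul, Matrix.mul_assoc]


end OffDiagBlock

lemma self_mul_conjTranspose_of_isometry {m n p : Type*} [Fintype m] [Fintype p] [DecidableEq p]
    (A : Matrix n m ℂ) (B : Matrix n p ℂ) {W : Matrix m p ℂ} (hW : Wᴴ * W = 1) (α s : ℝ) :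
    (α • A + s • (B * Wᴴ)) * (α • A + s • (B * Wᴴ))ᴴ =
      α ^ 2 • (A * Aᴴ) + (α * s) • (A * W * Bᴴ + B * Wᴴ * Aᴴ) + s ^ 2 • (B * Bᴴ) := by
  have hW' : Wᴴ * (W * Bᴴ) = Bᴴ := by rw [← Matrix.mul_assoc, hW, Matrix.one_mul]
  simp only [conjTranspose_add, conjTranspose_smul, conjTranspose_mul, conjTranspose_conjTranspose,
    star_trivial, Matrix.add_mul, Matrix.mul_add, Matrix.smul_mul, Matrix.mul_smul,
    Matrix.mul_assoc, hW']
  module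

lemma posSemidef_diagonal_add_smul_offDiagBlock {m n p : Type*} [Fintype m] [Fintype n]
    [Fintype p] [DecidableEq n] [DecidableEq p] (lam : n → ℝ) (hlam : ∀ i, 0 ≤ lam i)
    {f : m ↪ n} {g : p ↪ n} (hfg : ∀ k k', f k ≠ g k') {W : Matrix m p ℂ} (hW : Wᴴ * W = 1)
    {a b c : ℝ} (ha : 0 < a) (hfa : ∀ k, a ≤ lam (f k)) (hgb : ∀ k', b ≤ lam (g k'))
    (hc : c ^ 2 ≤ a * b) :
    (diagonal (fun i => (lam i : ℂ)) + c • offDiagBlock f g W).PosSemidef := by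
  set α := √a
  set s := c / α
  have hα : α ^ 2 = a := Real.sq_sqrt ha.le
  have hαs : α * s = c := mul_div_cancel₀ c (Real.sqrt_pos.2 ha).ne'
  have hs : s ^ 2 ≤ b := by rwa [div_pow, hα, div_le_iff₀ ha, mul_comm]
  set r : n → ℝ := fun i =>
    lam i - a * (Set.range f).indicator 1 i - s ^ 2 * (Set.range g).indicator 1 i
  have hr : ∀ i, 0 ≤ r i := by
    intro i
    by_cases hf : i ∈ Set.range f
    · obtain ⟨k, rfl⟩ := hf
      have hg : f k ∉ Set.range g := fun ⟨k', hk'⟩ => hfg k k' hk'.symm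
      simpa [r, hg] using hfa k
    · by_cases hg : i ∈ Set.range g
      · obtain ⟨k', rfl⟩ := hg
        simpa [r, hf] using hs.trans (hgb k')
      · simpa [r, hf, hg] using hlam i
  have hdiag : diagonal (fun i => (lam i : ℂ)) = diagonal (fun i => (r i : ℂ)) +
      a • diagonal ((Set.range f).indicator 1) + s ^ 2 • diagonal ((Set.range g).indicator 1) := by
    rw [← diagonal_smul, ← diagonal_smul, diagonal_add, diagonal_add]
    congr 1
    funext i
    simp only [r, Set.indicator, Pi.smul_apply, Pi.one_apply, Complex.real_smul]
    split_ifs <;> push_cast <;> ring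
  have hdecomp : diagonal (fun i => (lam i : ℂ)) + c • offDiagBlock f g W =
      diagonal (fun i => (r i : ℂ)) + (α • embeddingMatrix ℂ f + s • (embeddingMatrix ℂ g * Wᴴ)) *
        (α • embeddingMatrix ℂ f + s • (embeddingMatrix ℂ g * Wᴴ))ᴴ := by
    rw [self_mul_conjTranspose_of_isometry _ _ hW, embeddingMatrix_mul_conjTranspose,
      embeddingMatrix_mul_conjTranspose, hα, hαs, ← offDiagBlock, hdiag]
    abel
  rw [hdecomp]
  exact (posSemidef_diagonal_iff.2 fun i => by exact_mod_cast hr i).add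
    (posSemidef_self_mul_conjTranspose _)

lemma sq_le_two_rpow_mul_two_rpow {x y c : ℝ} (hc0 : 0 ≤ c) (hc : 2 * c ≤ 2 ^ (-x / 2 - y / 2)) :
    c ^ 2 ≤ 2 ^ (-x - 1) * 2 ^ (-y - 1) := by
  have hsq : ((2 : ℝ) ^ (-x / 2 - y / 2)) ^ 2 = 4 * (2 ^ (-x - 1) * 2 ^ (-y - 1)) := by
    rw [← Real.rpow_natCast, ← Real.rpow_mul zero_le_two, ← Real.rpow_add zero_lt_two,
      show (4 : ℝ) = 2 ^ (2 : ℝ) by norm_num, ← Real.rpow_add zero_lt_two]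
    norm_num
    ring_nf
  nlinarith [pow_le_pow_left₀ (by positivity) hc 2]

theorem offdiag_perturbation_valid_general
    {d d₁ d₂ : ℕ} (hd₂ : 1 ≤ d₂)
    (lam : Fin d → ℝ) (hnn : ∀ i, 0 ≤ lam i) (hsum1 : ∑ i, lam i = 1)
    (f : Fin d₁ ↪ Fin d) (g : Fin d₂ ↪ Fin d)
    (hdisj : ∀ k k', f k ≠ g k')
    (j j' : ℕ)
    (hfS : ∀ k, lam (f k) ∈ Set.Icc ((2 : ℝ) ^ (-(j : ℝ) - 1)) ((2 : ℝ) ^ (-(j : ℝ))))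
    (hgS : ∀ k, lam (g k) ∈ Set.Icc ((2 : ℝ) ^ (-(j' : ℝ) - 1)) ((2 : ℝ) ^ (-(j' : ℝ))))
    (W : Matrix (Fin d₁) (Fin d₂) ℂ) (hW : Wᴴ * W = 1)
    (ε : ℝ) (hε : 0 < ε) (hεle : ε ≤ (d₂ : ℝ) * (2 : ℝ) ^ (-(j : ℝ) / 2 - (j' : ℝ) / 2))
    (σ DW : Matrix (Fin d) (Fin d) ℂ)
    (hσ : σ = Matrix.diagonal (fun i => (lam i : ℂ)))
    (hDW : ∀ i i', DW i i' =
      ((ε / (2 * d₂) : ℝ) : ℂ) *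
        ((∑ k, ∑ k', if i = f k ∧ i' = g k' then W k k' else 0) +
         (∑ k, ∑ k', if i = g k' ∧ i' = f k then star (W k k') else 0))) :
    ε ≤ traceNorm (σ - (σ + DW)) ∧ (σ + DW).PosSemidef ∧ (σ + DW).trace = 1 := by
  set c := ε / (2 * d₂)
  have hd₂' : (0 : ℝ) < d₂ := by exact_mod_cast hd₂
  have hc0 : 0 ≤ c := by positivity
  have hDW' : DW = c • offDiagBlock f g W := by
    ext i i'
    rw [hDW, Matrix.smul_apply, offDiagBlock_apply, Complex.real_smul]
  refine ⟨?_, ?_, ?_⟩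
  · rw [sub_add_cancel_left, hDW', ← neg_smul, traceNorm_smul_offDiagBlock hdisj hW, abs_neg,
      abs_of_nonneg hc0, Fintype.card_fin, mul_right_comm, mul_div_cancel₀ ε (by positivity)]
  · rw [hσ, hDW']
    refine posSemidef_diagonal_add_smul_offDiagBlock lam hnn hdisj hW (by positivity)
      (fun k => (hfS k).1) (fun k' => (hgS k').1) (sq_le_two_rpow_mul_two_rpow hc0 ?_)
    rw [mul_div_assoc', div_le_iff₀ (by positivity)]
    linarith
  · rw [trace_add, hDW', trace_smul, trace_offDiagBlock hdisj, smul_zero, add_zero, hσ,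
      trace_diagonal, ← Complex.ofReal_sum, hsum1, Complex.ofReal_one]

/-- (Lemma `rhoW_facts`) Perturbing a diagonal density matrix `σ`
in the off-diagonal block indexed by disjoint bucket sets `S = range f`,
`S' = range g` (of sizes `d₁ ≥ d₂ ≥ 1`, with eigenvalues in `[2^{-j-1}, 2^{-j}]`
and `[2^{-j'-1}, 2^{-j'}]` respectively) by `(ε/(2d₂))·W` for `W` with orthonormal
columns: if `0 < ε ≤ d₂·2^{-j/2-j'/2}`, then `σ_W = σ + D_W` is `ε`-far from `σ`
in trace norm and is a density matrix. -/
theorem offdiag_perturbation_valid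
    {d d₁ d₂ : ℕ} (hd₂ : 1 ≤ d₂) (hd₁₂ : d₂ ≤ d₁)
    (lam : Fin d → ℝ) (hnn : ∀ i, 0 ≤ lam i) (hsum1 : ∑ i, lam i = 1)
    (f : Fin d₁ ↪ Fin d) (g : Fin d₂ ↪ Fin d)
    (hdisj : ∀ k k', f k ≠ g k')
    (j j' : ℕ)
    (hfS : ∀ k, lam (f k) ∈ Set.Icc ((2 : ℝ) ^ (-(j : ℝ) - 1)) ((2 : ℝ) ^ (-(j : ℝ))))
    (hgS : ∀ k, lam (g k) ∈ Set.Icc ((2 : ℝ) ^ (-(j' : ℝ) - 1)) ((2 : ℝ) ^ (-(j' : ℝ))))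
    (W : Matrix (Fin d₁) (Fin d₂) ℂ) (hW : Wᴴ * W = 1)
    (ε : ℝ) (hε : 0 < ε) (hεle : ε ≤ (d₂ : ℝ) * (2 : ℝ) ^ (-(j : ℝ) / 2 - (j' : ℝ) / 2))
    (σ DW : Matrix (Fin d) (Fin d) ℂ)
    (hσ : σ = Matrix.diagonal (fun i => (lam i : ℂ)))
    (hDW : ∀ i i', DW i i' =
      ((ε / (2 * d₂) : ℝ) : ℂ) *
        ((∑ k, ∑ k', if i = f k ∧ i' = g k' then W k k' else 0) +
         (∑ k, ∑ k', if i = g k' ∧ i' = f k then star (W k k') else 0))) :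
    ε ≤ traceNorm (σ - (σ + DW)) ∧ (σ + DW).PosSemidef ∧ (σ + DW).trace = 1 :=
  offdiag_perturbation_valid_general hd₂ lam hnn hsum1 f g hdisj j j' hfS hgS W hW ε hε hεle σ DW hσ
    hDW
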